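/- For the extended Calogero Hamiltonian (same setup, m = 3), the cubic quantity U³G = G p_u³ - 3Au p_u² P - 18A²L₀ G u² p_u + 6A³L₀ u³ P Poisson-commutes with H = ½p_u² + 3A·L + 3L₀A²u², where L, G, P are as in the m = 3 Calogero extension. -/

import Mathlib

/-!
`U³G` depends on the phase-space point only through `u`, `p_u`, `G` and `P`, and the brackets of
`H` with these four functions are linear in them: `{H, u} = -p_u`, `{H, p_u} = 6L₀A²u`,
`{H, G} = -3AP`, `{H, P} = 18AL₀G`. The singular interaction in `L` does not enter `{H, P}`
because it is invariant under the common translation of `x₁, x₂, x₃`. So `{H, U³G}` is the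
derivative of a cubic polynomial in four variables along a linear vector field, and it vanishes
identically.
-/

open scoped BigOperators

/-- Canonical Poisson bracket on `T*ℝ⁴` with coordinates
`q = (u,x₁,x₂,x₃)` and momenta `p = (p_u,p₁,p₂,p₃)`. -/
noncomputable def pb4 (f g : (Fin 4 → ℝ) → (Fin 4 → ℝ) → ℝ)
    (q p : Fin 4 → ℝ) : ℝ :=
  ∑ i : Fin 4,
    (fderiv ℝ (fun q' => f q' p) q (Pi.single i 1) *
        fderiv ℝ (fun p' => g q p') p (Pi.single i 1)
      - fderiv ℝ (fun p' => f q p') p (Pi.single i 1) *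
        fderiv ℝ (fun q' => g q' p) q (Pi.single i 1))

open ContinuousLinearMap

noncomputable def coord (i : Fin 4) : (Fin 4 → ℝ) →L[ℝ] ℝ := proj i

noncomputable def xSum : (Fin 4 → ℝ) →L[ℝ] ℝ := coord 1 + coord 2 + coord 3

theorem hasFDerivAt_coord (i : Fin 4) (x : Fin 4 → ℝ) :
    HasFDerivAt (fun x' : Fin 4 → ℝ => x' i) (coord i) x :=
  (coord i).hasFDerivAt

noncomputable def xShift : Fin 4 → ℝ := Pi.single 1 1 + Pi.single 2 1 + Pi.single 3 1

theorem fderiv_apply_eq_of_quadratic_on_line {E : Type*} [NormedAddCommGroup E]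
    [NormedSpace ℝ E] {φ : E → ℝ} {x v : E} {b c : ℝ} (hφ : DifferentiableAt ℝ φ x)
    (hline : ∀ t : ℝ, φ (x + t • v) = φ x + b * t + c * t ^ 2) :
    fderiv ℝ φ x v = b := by
  have hquad : HasDerivAt (fun t : ℝ => φ x + b * t + c * t ^ 2) b 0 := by
    simpa using (((hasDerivAt_id (0 : ℝ)).const_mul b).const_add (φ x)).fun_add
      ((hasDerivAt_pow 2 (0 : ℝ)).const_mul c)
  have hφv : HasLineDerivAt ℝ φ b x v := by
    unfold HasLineDerivAt
    simpa only [hline] using hquad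
  exact (hφ.hasFDerivAt.hasLineDerivAt v).unique hφv

theorem pb4_eq_of_hasFDerivAt_coord_zero_xSum {f g : (Fin 4 → ℝ) → (Fin 4 → ℝ) → ℝ}
    {q p : Fin 4 → ℝ} {a b c d : ℝ}
    (hgq : HasFDerivAt (fun q' => g q' p) (a • coord 0 + b • xSum) q)
    (hgp : HasFDerivAt (fun p' => g q p') (c • coord 0 + d • xSum) p) :
    pb4 f g q p =
      c * fderiv ℝ (fun q' => f q' p) q (Pi.single 0 1)
        + d * fderiv ℝ (fun q' => f q' p) q xShift
        - a * fderiv ℝ (fun p' => f q p') p (Pi.single 0 1)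
        - b * fderiv ℝ (fun p' => f q p') p xShift := by
  simp only [pb4, Fin.sum_univ_four, hgq.fderiv, hgp.fderiv, xShift, map_add]
  simp only [coord, xSum, add_apply, smul_apply, proj_apply, smul_eq_mul, Pi.single_apply,
    Fin.reduceEq, if_true, if_false]
  ring

section Calogero

variable (A L₀ k x01 x02 x03 : ℝ)

noncomputable def calogeroL (q p : Fin 4 → ℝ) : ℝ :=
  (1 / 2) * ((p 1) ^ 2 + (p 2) ^ 2 + (p 3) ^ 2)
    + 3 * L₀ * ((q 1 + x01) ^ 2 + (q 2 + x02) ^ 2 + (q 3 + x03) ^ 2)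
    + k * ((q 1 - q 2)⁻¹ ^ 2 + (q 1 - q 3)⁻¹ ^ 2 + (q 2 - q 3)⁻¹ ^ 2)

noncomputable def extendedH (q p : Fin 4 → ℝ) : ℝ :=
  (1 / 2) * (p 0) ^ 2 + 3 * A * calogeroL L₀ k x01 x02 x03 q p + 3 * L₀ * A ^ 2 * (q 0) ^ 2

def calogeroG (q : Fin 4 → ℝ) : ℝ := x01 + x02 + x03 + q 1 + q 2 + q 3

def totalMomentum (p : Fin 4 → ℝ) : ℝ := p 1 + p 2 + p 3

def cubicIntegral (q p : Fin 4 → ℝ) : ℝ :=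
  calogeroG x01 x02 x03 q * (p 0) ^ 3
    - 3 * A * q 0 * (p 0) ^ 2 * totalMomentum p
    - 18 * A ^ 2 * L₀ * calogeroG x01 x02 x03 q * (q 0) ^ 2 * p 0
    + 6 * A ^ 3 * L₀ * (q 0) ^ 3 * totalMomentum p

variable {A L₀ k x01 x02 x03}

theorem hasFDerivAt_calogeroG (q : Fin 4 → ℝ) :
    HasFDerivAt (calogeroG x01 x02 x03) xSum q :=
  (((hasFDerivAt_coord 1 q).const_add _).add (hasFDerivAt_coord 2 q)).add (hasFDerivAt_coord 3 q)

theorem hasFDerivAt_totalMomentum (p : Fin 4 → ℝ) : HasFDerivAt totalMomentum xSum p :=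
  ((hasFDerivAt_coord 1 p).add (hasFDerivAt_coord 2 p)).add (hasFDerivAt_coord 3 p)

theorem hasFDerivAt_cubicIntegral_q (q p : Fin 4 → ℝ) :
    HasFDerivAt (fun q' => cubicIntegral A L₀ x01 x02 x03 q' p)
      ((-3 * A * p 0 ^ 2 * totalMomentum p
          - 36 * A ^ 2 * L₀ * calogeroG x01 x02 x03 q * q 0 * p 0
          + 18 * A ^ 3 * L₀ * q 0 ^ 2 * totalMomentum p) • coord 0
        + (p 0 ^ 3 - 18 * A ^ 2 * L₀ * q 0 ^ 2 * p 0) • xSum) q := by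
  have hG := hasFDerivAt_calogeroG (x01 := x01) (x02 := x02) (x03 := x03) q
  have hu := hasFDerivAt_coord 0 q
  have h := (((hG.mul_const (p 0 ^ 3)).sub
    (((hu.const_mul (3 * A)).mul_const (p 0 ^ 2)).mul_const (totalMomentum p))).sub
    (((hG.const_mul (18 * A ^ 2 * L₀)).mul (hu.pow 2)).mul_const (p 0))).add
    ((hu.pow 3).const_mul (6 * A ^ 3 * L₀) |>.mul_const (totalMomentum p))
  refine h.congr_fderiv ?_
  ext v
  simp only [add_apply, sub_apply, smul_apply, smul_eq_mul, nsmul_eq_mul]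
  ring

theorem hasFDerivAt_cubicIntegral_p (q p : Fin 4 → ℝ) :
    HasFDerivAt (fun p' => cubicIntegral A L₀ x01 x02 x03 q p')
      ((3 * calogeroG x01 x02 x03 q * p 0 ^ 2 - 6 * A * q 0 * p 0 * totalMomentum p
          - 18 * A ^ 2 * L₀ * calogeroG x01 x02 x03 q * q 0 ^ 2) • coord 0
        + (-3 * A * q 0 * p 0 ^ 2 + 6 * A ^ 3 * L₀ * q 0 ^ 3) • xSum) p := by
  have hP := hasFDerivAt_totalMomentum p
  have hw := hasFDerivAt_coord 0 p
  have h := ((((hw.pow 3).const_mul (calogeroG x01 x02 x03 q)).sub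
    (((hw.pow 2).const_mul (3 * A * q 0)).mul hP)).sub
    (hw.const_mul (18 * A ^ 2 * L₀ * calogeroG x01 x02 x03 q * q 0 ^ 2))).add
    (hP.const_mul (6 * A ^ 3 * L₀ * q 0 ^ 3))
  refine h.congr_fderiv ?_
  ext v
  simp only [add_apply, sub_apply, smul_apply, smul_eq_mul, nsmul_eq_mul]
  ring

theorem differentiableAt_extendedH_q {q : Fin 4 → ℝ} (p : Fin 4 → ℝ)
    (h12 : q 1 ≠ q 2) (h13 : q 1 ≠ q 3) (h23 : q 2 ≠ q 3) :
    DifferentiableAt ℝ (fun q' => extendedH A L₀ k x01 x02 x03 q' p) q := by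
  have := sub_ne_zero.mpr h12
  have := sub_ne_zero.mpr h13
  have := sub_ne_zero.mpr h23
  unfold extendedH calogeroL
  fun_prop (disch := assumption)

theorem differentiableAt_extendedH_p (q p : Fin 4 → ℝ) :
    DifferentiableAt ℝ (fun p' => extendedH A L₀ k x01 x02 x03 q p') p := by
  unfold extendedH calogeroL
  fun_prop

theorem fderiv_extendedH_q_single_zero {q : Fin 4 → ℝ} (p : Fin 4 → ℝ)
    (h12 : q 1 ≠ q 2) (h13 : q 1 ≠ q 3) (h23 : q 2 ≠ q 3) :
    fderiv ℝ (fun q' => extendedH A L₀ k x01 x02 x03 q' p) q (Pi.single 0 1)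
      = 6 * L₀ * A ^ 2 * q 0 :=
  fderiv_apply_eq_of_quadratic_on_line (c := 3 * L₀ * A ^ 2)
    (differentiableAt_extendedH_q p h12 h13 h23) fun t => by
      simp only [extendedH, calogeroL, Pi.add_apply, Pi.smul_apply, smul_eq_mul,
        Pi.single_apply, Fin.reduceEq, if_true, if_false]
      ring

/-- The interaction term depends only on the differences `xᵢ - xⱼ`, so it is constant along
`xShift` and `H` restricted to that line is an explicit quadratic. -/
theorem fderiv_extendedH_q_xShift {q : Fin 4 → ℝ} (p : Fin 4 → ℝ)
    (h12 : q 1 ≠ q 2) (h13 : q 1 ≠ q 3) (h23 : q 2 ≠ q 3) :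
    fderiv ℝ (fun q' => extendedH A L₀ k x01 x02 x03 q' p) q xShift
      = 18 * A * L₀ * calogeroG x01 x02 x03 q :=
  fderiv_apply_eq_of_quadratic_on_line (c := 27 * A * L₀)
    (differentiableAt_extendedH_q p h12 h13 h23) fun t => by
      simp only [extendedH, calogeroL, calogeroG, xShift, Pi.add_apply, Pi.smul_apply,
        smul_eq_mul, Pi.single_apply, Fin.reduceEq, if_true, if_false]
      ring

theorem fderiv_extendedH_p_single_zero (q p : Fin 4 → ℝ) :
    fderiv ℝ (fun p' => extendedH A L₀ k x01 x02 x03 q p') p (Pi.single 0 1) = p 0 :=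
  fderiv_apply_eq_of_quadratic_on_line (c := 1 / 2) (differentiableAt_extendedH_p q p)
    fun t => by
      simp only [extendedH, calogeroL, Pi.add_apply, Pi.smul_apply, smul_eq_mul,
        Pi.single_apply, Fin.reduceEq, if_true, if_false]
      ring

theorem fderiv_extendedH_p_xShift (q p : Fin 4 → ℝ) :
    fderiv ℝ (fun p' => extendedH A L₀ k x01 x02 x03 q p') p xShift
      = 3 * A * totalMomentum p :=
  fderiv_apply_eq_of_quadratic_on_line (c := 9 / 2 * A) (differentiableAt_extendedH_p q p)
    fun t => by
      simp only [extendedH, calogeroL, totalMomentum, xShift, Pi.add_apply, Pi.smul_apply,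
        smul_eq_mul, Pi.single_apply, Fin.reduceEq, if_true, if_false]
      ring

end Calogero

theorem calogero_extension_m3_general (A L₀ k x01 x02 x03 : ℝ)
    (L H F : (Fin 4 → ℝ) → (Fin 4 → ℝ) → ℝ)
    (hL : ∀ q p, L q p =
      (1 / 2) * ((p 1) ^ 2 + (p 2) ^ 2 + (p 3) ^ 2)
        + 3 * L₀ * ((q 1 + x01) ^ 2 + (q 2 + x02) ^ 2 + (q 3 + x03) ^ 2)
        + k * ((q 1 - q 2)⁻¹ ^ 2 + (q 1 - q 3)⁻¹ ^ 2 + (q 2 - q 3)⁻¹ ^ 2))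
    (hH : ∀ q p, H q p =
      (1 / 2) * (p 0) ^ 2 + 3 * A * L q p + 3 * L₀ * A ^ 2 * (q 0) ^ 2)
    (hF : ∀ q p, F q p =
      (x01 + x02 + x03 + q 1 + q 2 + q 3) * (p 0) ^ 3
        - 3 * A * q 0 * (p 0) ^ 2 * (p 1 + p 2 + p 3)
        - 18 * A ^ 2 * L₀ * (x01 + x02 + x03 + q 1 + q 2 + q 3) * (q 0) ^ 2 * p 0
        + 6 * A ^ 3 * L₀ * (q 0) ^ 3 * (p 1 + p 2 + p 3)) :
    ∀ q p : Fin 4 → ℝ, q 1 ≠ q 2 → q 1 ≠ q 3 → q 2 ≠ q 3 →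
      pb4 H F q p = 0 := by
  intro q p h12 h13 h23
  obtain rfl : H = extendedH A L₀ k x01 x02 x03 := by
    ext q' p'
    rw [hH, hL]
    rfl
  obtain rfl : F = cubicIntegral A L₀ x01 x02 x03 := by
    ext q' p'
    exact hF q' p'
  rw [pb4_eq_of_hasFDerivAt_coord_zero_xSum (hasFDerivAt_cubicIntegral_q q p)
      (hasFDerivAt_cubicIntegral_p q p),
    fderiv_extendedH_q_single_zero p h12 h13 h23, fderiv_extendedH_q_xShift p h12 h13 h23,
    fderiv_extendedH_p_single_zero, fderiv_extendedH_p_xShift]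
  ring

/-- For the extended three-body Calogero Hamiltonian with `m = 3`,
`H = ½p_u² + 3A·L + 3L₀A²u²`, the cubic quantity
`U³G = G p_u³ - 3Au p_u² P - 18A²L₀ G u² p_u + 6A³L₀ u³ P` Poisson-commutes with `H` on the region
where the `xᵢ` are pairwise distinct. -/
theorem calogero_extension_m3 (A L₀ k x01 x02 x03 : ℝ) (hA : A ≠ 0)
    (L H F : (Fin 4 → ℝ) → (Fin 4 → ℝ) → ℝ)
    (hL : ∀ q p, L q p =
      (1 / 2) * ((p 1) ^ 2 + (p 2) ^ 2 + (p 3) ^ 2)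
        + 3 * L₀ * ((q 1 + x01) ^ 2 + (q 2 + x02) ^ 2 + (q 3 + x03) ^ 2)
        + k * ((q 1 - q 2)⁻¹ ^ 2 + (q 1 - q 3)⁻¹ ^ 2 + (q 2 - q 3)⁻¹ ^ 2))
    (hH : ∀ q p, H q p =
      (1 / 2) * (p 0) ^ 2 + 3 * A * L q p + 3 * L₀ * A ^ 2 * (q 0) ^ 2)
    (hF : ∀ q p, F q p =
      (x01 + x02 + x03 + q 1 + q 2 + q 3) * (p 0) ^ 3
        - 3 * A * q 0 * (p 0) ^ 2 * (p 1 + p 2 + p 3)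
        - 18 * A ^ 2 * L₀ * (x01 + x02 + x03 + q 1 + q 2 + q 3) * (q 0) ^ 2 * p 0
        + 6 * A ^ 3 * L₀ * (q 0) ^ 3 * (p 1 + p 2 + p 3)) :
    ∀ q p : Fin 4 → ℝ, q 1 ≠ q 2 → q 1 ≠ q 3 → q 2 ≠ q 3 →
      pb4 H F q p = 0 :=
  calogero_extension_m3_general A L₀ k x01 x02 x03 L H F hL hH hF
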